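/- Let g be entire on ℂ^p with |g(z)| ≤ C e^{τ|z|}, and suppose sup_{x ∈ ℝ^p} |g(x)| ≤ M. Then for all z = x + iy ∈ ℂ^p, |g(z)| ≤ M e^{τ(|y₁| + ⋯ + |y_p|)}. -/

import Mathlib

open MeasureTheory Filter

noncomputable section

def toC (p : ℕ) (x : EuclideanSpace ℝ (Fin p)) : EuclideanSpace ℂ (Fin p) :=
  WithLp.toLp 2 (fun i => (x i : ℂ))

/-! In one variable, `exp (-τ ζ) • h (I ζ)` is bounded on both boundary rays of the right
half-plane (by `M` on the imaginary axis, by `C` on the positive real axis) and has order one,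
so the half-plane Phragmén–Lindelöf principle bounds it by `M`; undoing the rotation gives
`‖h w‖ ≤ M e^{τ |Im w|}`. In several variables, restrict `g` to the complex line through `z` in
the direction of one coordinate: the restriction still has exponential type `τ`, and by
induction it is bounded on the real points of that line by `M e^{τ Σ |Im z_j|}`, the sum over
the coordinates already complexified. -/

open Complex

theorem norm_apply_add_smul_le {E F : Type*} [NormedAddCommGroup E] [NormedAddCommGroup F]
    [NormedSpace ℂ F] {g : F → E} {C τ : ℝ} (hgrowth : ∀ z, ‖g z‖ ≤ C * Real.exp (τ * ‖z‖))
    (z₀ v : F) (hv : ‖v‖ = 1) (w : ℂ) :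
    ‖g (z₀ + w • v)‖ ≤ C * Real.exp (|τ| * ‖z₀‖) * Real.exp (τ * ‖w‖) := by
  have hC : 0 ≤ C := by
    simpa using (norm_nonneg _).trans (hgrowth 0)
  have hdist : |‖z₀ + w • v‖ - ‖w‖| ≤ ‖z₀‖ := by
    simpa [norm_smul, hv] using abs_norm_sub_norm_le (z₀ + w • v) (w • v)
  have hexp : τ * (‖z₀ + w • v‖ - ‖w‖) ≤ |τ| * ‖z₀‖ :=
    calc τ * (‖z₀ + w • v‖ - ‖w‖) ≤ |τ| * |‖z₀ + w • v‖ - ‖w‖| := by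
          rw [← abs_mul]; exact le_abs_self _
      _ ≤ |τ| * ‖z₀‖ := by gcongr
  calc ‖g (z₀ + w • v)‖ ≤ C * Real.exp (τ * ‖z₀ + w • v‖) := hgrowth _
    _ ≤ C * Real.exp (|τ| * ‖z₀‖ + τ * ‖w‖) := by gcongr; linarith
    _ = C * Real.exp (|τ| * ‖z₀‖) * Real.exp (τ * ‖w‖) := by rw [Real.exp_add, mul_assoc]

variable {E : Type*} [NormedAddCommGroup E] [NormedSpace ℂ E]

theorem norm_le_mul_exp_im_of_bounded_on_real {h : ℂ → E} {C τ M : ℝ} (hd : Differentiable ℂ h)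
    (hgrowth : ∀ w, ‖h w‖ ≤ C * Real.exp (τ * ‖w‖)) (hreal : ∀ x : ℝ, ‖h x‖ ≤ M)
    {w : ℂ} (hw : 0 ≤ w.im) : ‖h w‖ ≤ M * Real.exp (τ * w.im) := by
  set f : ℂ → E := fun ζ => exp (-τ * ζ) • h (I * ζ) with hf
  have hf_norm : ∀ ζ, ‖f ζ‖ = Real.exp (-τ * ζ.re) * ‖h (I * ζ)‖ := fun ζ => by
    rw [hf, norm_smul, norm_exp, ← ofReal_neg, re_ofReal_mul]
  have hC : 0 ≤ C := by
    simpa using (norm_nonneg _).trans (hgrowth 0)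
  have hfd : Differentiable ℂ f :=
    ((differentiable_id.const_mul _).cexp).smul (hd.comp (differentiable_id.const_mul I))
  have hf_exp : ∀ ζ, ‖f ζ‖ ≤ C * Real.exp (2 * |τ| * ‖ζ‖) := fun ζ => by
    have hre : -τ * ζ.re ≤ |τ| * ‖ζ‖ := by
      calc -τ * ζ.re ≤ |-τ * ζ.re| := le_abs_self _
        _ = |τ| * |ζ.re| := by rw [abs_mul, abs_neg]
        _ ≤ |τ| * ‖ζ‖ := by gcongr; exact abs_re_le_norm ζ
    have hτ : τ * ‖ζ‖ ≤ |τ| * ‖ζ‖ := by gcongr; exact le_abs_self τ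
    calc ‖f ζ‖ ≤ Real.exp (|τ| * ‖ζ‖) * (C * Real.exp (|τ| * ‖ζ‖)) := by
          rw [hf_norm]
          gcongr
          refine (hgrowth _).trans ?_
          rw [norm_mul, norm_I, one_mul]
          gcongr
      _ = C * Real.exp (2 * |τ| * ‖ζ‖) := by
          rw [mul_left_comm, ← Real.exp_add]; ring_nf
  have hf_pos_real : ∀ x : ℝ, 0 ≤ x → ‖f x‖ ≤ C := fun x hx => by
    rw [hf_norm, ofReal_re]
    calc Real.exp (-τ * x) * ‖h (I * x)‖ ≤ Real.exp (-τ * x) * (C * Real.exp (τ * x)) := by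
          gcongr
          simpa [abs_of_nonneg hx] using hgrowth (I * x)
      _ = C := by rw [mul_left_comm, ← Real.exp_add]; simp
  have hf_imag : ∀ y : ℝ, ‖f (y * I)‖ ≤ M := fun y => by
    rw [hf_norm, show I * (y * I) = ((-y : ℝ) : ℂ) by push_cast; ring_nf; simp]
    simpa using hreal (-y)
  have hf_bound : ‖f (-I * w)‖ ≤ M :=
    PhragmenLindelof.right_half_plane_of_bounded_on_real hfd.diffContOnCl
      ⟨1, one_lt_two, 2 * |τ|, .of_bound C (.of_forall fun ζ => by simpa using hf_exp ζ)⟩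
      (isBoundedUnder_of_eventually_le ((eventually_ge_atTop 0).mono hf_pos_real))
      hf_imag (by simpa using hw)
  rw [hf_norm, show I * (-I * w) = w by ring_nf; simp] at hf_bound
  calc ‖h w‖ = Real.exp (-τ * (-I * w).re) * ‖h w‖ * Real.exp (τ * w.im) := by
        rw [mul_right_comm, ← Real.exp_add]; simp
    _ ≤ M * Real.exp (τ * w.im) := by gcongr

theorem norm_le_mul_exp_abs_im_of_bounded_on_real {h : ℂ → E} {C τ M : ℝ}
    (hd : Differentiable ℂ h) (hgrowth : ∀ w, ‖h w‖ ≤ C * Real.exp (τ * ‖w‖))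
    (hreal : ∀ x : ℝ, ‖h x‖ ≤ M) (w : ℂ) : ‖h w‖ ≤ M * Real.exp (τ * |w.im|) := by
  rcases le_total 0 w.im with hw | hw
  · rw [abs_of_nonneg hw]
    exact norm_le_mul_exp_im_of_bounded_on_real hd hgrowth hreal hw
  · rw [abs_of_nonpos hw]
    simpa using norm_le_mul_exp_im_of_bounded_on_real (h := fun w => h (-w))
      (hd.comp differentiable_neg) (fun w => by simpa using hgrowth (-w))
      (fun x => by simpa using hreal (-x)) (w := -w) (by simpa using hw)

theorem norm_le_mul_exp_sum_abs_im_of_im_eq_zero_off {ι : Type*} [Fintype ι]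
    {g : EuclideanSpace ℂ ι → E} {C τ M : ℝ} (hg : Differentiable ℂ g)
    (hgrowth : ∀ z, ‖g z‖ ≤ C * Real.exp (τ * ‖z‖))
    (hreal : ∀ z : EuclideanSpace ℂ ι, (∀ j, (z j).im = 0) → ‖g z‖ ≤ M) (s : Finset ι) :
    ∀ z : EuclideanSpace ℂ ι, (∀ j ∉ s, (z j).im = 0) →
      ‖g z‖ ≤ M * Real.exp (τ * ∑ j ∈ s, |(z j).im|) := by
  classical
  induction s using Finset.induction_on with
  | empty => intro z hz; simpa using hreal z (by simpa using hz)
  | insert a s ha ih =>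
    intro z hz
    set e : EuclideanSpace ℂ ι := EuclideanSpace.single a 1
    set z₀ := z - z a • e
    have hline_apply : ∀ (w : ℂ) j, (z₀ + w • e) j = if j = a then w else z j := by
      intro w j
      by_cases hj : j = a <;> simp [z₀, e, hj]
    have hline : z₀ + z a • e = z := sub_add_cancel _ _
    have hreal_line :
        ∀ x : ℝ, ‖g (z₀ + (x : ℂ) • e)‖ ≤ M * Real.exp (τ * ∑ j ∈ s, |(z j).im|) := by
      intro x
      have hx := ih (z₀ + (x : ℂ) • e) fun j hj => by
        rw [hline_apply]
        split_ifs with hja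
        · simp
        · exact hz j (by simp [hja, hj])
      refine hx.trans_eq ?_
      congr 3
      refine Finset.sum_congr rfl fun j hj => ?_
      rw [hline_apply, if_neg (ne_of_mem_of_not_mem hj ha)]
    have := norm_le_mul_exp_abs_im_of_bounded_on_real (h := fun w => g (z₀ + w • e))
      (hg.comp ((differentiable_const _).add (differentiable_id.smul_const _)))
      (norm_apply_add_smul_le hgrowth z₀ e (by simp [e])) hreal_line (z a)
    rw [hline] at this
    refine this.trans_eq ?_
    rw [Finset.sum_insert ha, mul_add, Real.exp_add]
    ring

/-- an entire function of exponential type bounded on ℝ^p satisfies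
the Phragmén–Lindelöf bound M·e^{τ(|y₁|+⋯+|y_p|)} on ℂ^p. -/
theorem multivariable_phragmen_lindelof (p : ℕ) (g : EuclideanSpace ℂ (Fin p) → ℂ)
    (C τ M : ℝ)
    (hg : Differentiable ℂ g)
    (hbound : ∀ z, ‖g z‖ ≤ C * Real.exp (τ * ‖z‖))
    (hreal : ∀ x : EuclideanSpace ℝ (Fin p), ‖g (toC p x)‖ ≤ M) :
    ∀ z : EuclideanSpace ℂ (Fin p),
      ‖g z‖ ≤ M * Real.exp (τ * ∑ j, |(z j).im|) := by
  have hreal' : ∀ z : EuclideanSpace ℂ (Fin p), (∀ j, (z j).im = 0) → ‖g z‖ ≤ M := by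
    intro z hz
    have hz_real : z = toC p (WithLp.toLp 2 fun j => (z j).re) := by
      ext j
      apply Complex.ext <;> simp [toC, hz]
    rw [hz_real]
    exact hreal _
  intro z
  simpa using
    norm_le_mul_exp_sum_abs_im_of_im_eq_zero_off hg hbound hreal' Finset.univ z (by simp)

end
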